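/- arXiv:math/9603208 — 6 statements merged into one kernel-verified Lean document; each statement's English description precedes it below -/
import Mathlib

section
/- For every dimension d ≥ 1, the integral over the positive orthant ℝ₊^d of (∑_{i=1}^d y_i²) · exp(−(∑_{i=1}^d y_i)²) dy equals d²·Γ(d/2) / (2·(d+1)!). -/
/-!
Write the integrand as `∑ᵢ yᵢ² · h(∑ⱼ yⱼ)` with `h t = exp (-t²)`. Splitting off the coordinate
`yᵢ` and then the remaining coordinates one at a time, Tonelli and the substitution `t = x + s`
show that each step convolves the weight with `1` on the half-line, i.e. integrates it once:
starting from `x ^ k / k!` this raises it to `t ^ (k + 1) / (k + 1)!`. Hence, in dimension `n + 1`,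
`∫ yᵢ ^ k h(∑ y) = k! / (n + k)! · ∫₀^∞ t ^ (n + k) h(t) dt`, and for `k = 2` the remaining
Gaussian moment is `Γ((n + 3) / 2) / 2`.
-/

open MeasureTheory Real Set
open scoped ENNReal Nat

theorem lintegral_pi_eq_lintegral_insertNth {α : Type*} [MeasurableSpace α] (ν : Measure α)
    [SigmaFinite ν] {n : ℕ} (i : Fin (n + 1)) {F : (Fin (n + 1) → α) → ℝ≥0∞}
    (hF : Measurable F) :
    ∫⁻ z, F z ∂Measure.pi (fun _ => ν) =
      ∫⁻ x, ∫⁻ y, F (i.insertNth x y) ∂Measure.pi (fun _ => ν) ∂ν := by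
  have he := (measurePreserving_piFinSuccAbove (fun _ : Fin (n + 1) => ν) i).symm
  rw [← he.lintegral_comp_emb (MeasurableEquiv.measurableEmbedding _)]
  exact lintegral_prod _ (hF.comp (MeasurableEquiv.measurable _)).aemeasurable

theorem lintegral_Ici_zero_comp_const_add (h : ℝ → ℝ≥0∞) (x : ℝ) :
    ∫⁻ s in Ici 0, h (x + s) = ∫⁻ t in Ici x, h t := by
  have := (measurePreserving_add_left volume x).setLIntegral_comp_preimage_emb
    (measurableEmbedding_addLeft x) h (Ici x)
  rwa [preimage_const_add_Ici, sub_self] at this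

theorem lintegral_Ici_mul_lintegral_Ici_zero_comp_const_add {f h : ℝ → ℝ≥0∞} (hf : Measurable f)
    (hh : Measurable h) :
    ∫⁻ x in Ici 0, f x * ∫⁻ s in Ici 0, h (x + s) =
      ∫⁻ t in Ici 0, (∫⁻ x in Icc 0 t, f x) * h t := by
  set K : ℝ → ℝ → ℝ≥0∞ := fun x t => if 0 ≤ x ∧ x ≤ t then f x * h t else 0
  have hK : Measurable (Function.uncurry K) :=
    Measurable.ite (measurableSet_le measurable_const measurable_fst |>.inter
      (measurableSet_le measurable_fst measurable_snd)) (hf.comp measurable_fst |>.mul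
      (hh.comp measurable_snd)) measurable_const
  calc ∫⁻ x in Ici 0, f x * ∫⁻ s in Ici 0, h (x + s) = ∫⁻ x, ∫⁻ t, K x t := by
        rw [← lintegral_indicator measurableSet_Ici]
        congr 1 with x
        by_cases hx : 0 ≤ x
        · rw [indicator_of_mem (mem_Ici.2 hx), lintegral_Ici_zero_comp_const_add,
            ← lintegral_const_mul _ hh, ← lintegral_indicator measurableSet_Ici]
          congr 1 with t
          simp [K, indicator_apply, hx]
        · simp [K, hx]
    _ = ∫⁻ t, ∫⁻ x, K x t := lintegral_lintegral_swap hK.aemeasurable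
    _ = ∫⁻ t in Ici 0, (∫⁻ x in Icc 0 t, f x) * h t := by
        rw [← lintegral_indicator measurableSet_Ici]
        congr 1 with t
        by_cases ht : 0 ≤ t
        · rw [indicator_of_mem (mem_Ici.2 ht), ← lintegral_mul_const _ hf,
            ← lintegral_indicator measurableSet_Icc]
          congr 1 with x
          simp [K, indicator_apply]
        · have hKt : ∀ x, K x t = 0 := fun x => if_neg fun hxt => ht (hxt.1.trans hxt.2)
          simp [hKt, ht]

theorem lintegral_Icc_ofReal_pow_div_factorial (k : ℕ) {t : ℝ} (ht : 0 ≤ t) :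
    ∫⁻ x in Icc 0 t, ENNReal.ofReal (x ^ k / k !) =
      ENNReal.ofReal (t ^ (k + 1) / (k + 1)!) := by
  have hcont : Continuous fun x : ℝ => x ^ k / k ! := by fun_prop
  rw [← ofReal_integral_eq_lintegral_ofReal
      (hcont.continuousOn.integrableOn_compact isCompact_Icc)
      ((ae_restrict_iff' measurableSet_Icc).2 (.of_forall fun x hx => by
        have := hx.1; positivity)),
    integral_Icc_eq_integral_Ioc, ← intervalIntegral.integral_of_le ht,
    intervalIntegral.integral_div, integral_pow, zero_pow k.succ_ne_zero, sub_zero, div_div,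
    Nat.factorial_succ]
  push_cast
  rfl

local notation "μ₊" => Measure.pi fun _ => Measure.restrict volume (Ici (0 : ℝ))

theorem volume_restrict_orthant (ι : Type*) [Fintype ι] :
    volume.restrict {y : ι → ℝ | ∀ i, 0 ≤ y i} = μ₊ := by
  rw [← Measure.restrict_pi_pi, volume_pi]
  congr with y
  simp

theorem lintegral_pow_div_factorial_mul_lintegral_add_sum (n k : ℕ) {h : ℝ → ℝ≥0∞}
    (hh : Measurable h) :
    ∫⁻ x in Ici 0, ENNReal.ofReal (x ^ k / k !) * ∫⁻ y : Fin n → ℝ, h (x + ∑ j, y j) ∂μ₊ =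
      ∫⁻ t in Ici 0, ENNReal.ofReal (t ^ (n + k) / (n + k)!) * h t := by
  induction n generalizing k with
  | zero => simp
  | succ n ih =>
    set H : ℝ → ℝ≥0∞ := fun u => ∫⁻ y : Fin n → ℝ, h (u + ∑ j, y j) ∂μ₊
    have hH : Measurable H := by
      have : Measurable fun p : ℝ × (Fin n → ℝ) => h (p.1 + ∑ j, p.2 j) := hh.comp (by fun_prop)
      exact this.lintegral_prod_right'
    have hsplit : ∀ x,
        ∫⁻ y : Fin (n + 1) → ℝ, h (x + ∑ j, y j) ∂μ₊ = ∫⁻ s in Ici 0, H (x + s) := by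
      intro x
      rw [lintegral_pi_eq_lintegral_insertNth _ 0 (F := fun y => h (x + ∑ j, y j))
        (hh.comp (by fun_prop))]
      simp [H, Fin.sum_univ_succ, add_assoc]
    simp_rw [hsplit]
    rw [lintegral_Ici_mul_lintegral_Ici_zero_comp_const_add (by fun_prop) hH,
      setLIntegral_congr_fun measurableSet_Ici fun t ht => by
        rw [lintegral_Icc_ofReal_pow_div_factorial k ht],
      ih (k + 1), add_right_comm n 1 k, ← add_assoc]

theorem lintegral_pow_mul_sum (n k : ℕ) (i : Fin (n + 1)) {h : ℝ → ℝ≥0∞} (hh : Measurable h) :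
    ∫⁻ z : Fin (n + 1) → ℝ, ENNReal.ofReal (z i ^ k) * h (∑ j, z j) ∂μ₊ =
      ∫⁻ t in Ici 0, ENNReal.ofReal (k ! / (n + k)! * t ^ (n + k)) * h t := by
  have hk : ∀ x : ℝ, ENNReal.ofReal (x ^ k) = ENNReal.ofReal k ! * ENNReal.ofReal (x ^ k / k !) :=
    fun x => by rw [← ENNReal.ofReal_mul (by positivity), mul_div_cancel₀ _ (by positivity)]
  have hsum : ∀ (x : ℝ) (y : Fin n → ℝ), ∑ j, i.insertNth x y j = x + ∑ j, y j := fun x y => by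
    simp [Fin.sum_univ_succAbove _ i]
  calc ∫⁻ z : Fin (n + 1) → ℝ, ENNReal.ofReal (z i ^ k) * h (∑ j, z j) ∂μ₊
      = ∫⁻ x in Ici 0, ENNReal.ofReal k ! *
          (ENNReal.ofReal (x ^ k / k !) * ∫⁻ y : Fin n → ℝ, h (x + ∑ j, y j) ∂μ₊) := by
        rw [lintegral_pi_eq_lintegral_insertNth _ i (by fun_prop)]
        refine lintegral_congr fun x => ?_
        simp_rw [Fin.insertNth_apply_same, hsum, hk, mul_assoc]
        rw [lintegral_const_mul' _ _ ENNReal.ofReal_ne_top,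
          lintegral_const_mul' _ _ ENNReal.ofReal_ne_top]
    _ = ENNReal.ofReal k ! * ∫⁻ t in Ici 0, ENNReal.ofReal (t ^ (n + k) / (n + k)!) * h t := by
        rw [lintegral_const_mul' _ _ ENNReal.ofReal_ne_top,
          lintegral_pow_div_factorial_mul_lintegral_add_sum n k hh]
    _ = _ := by
        rw [← lintegral_const_mul' _ _ ENNReal.ofReal_ne_top]
        refine lintegral_congr fun t => ?_
        rw [← mul_assoc, ← ENNReal.ofReal_mul (by positivity), mul_div_assoc', div_mul_eq_mul_div]

theorem lintegral_sum_pow_mul_sum (n k : ℕ) {h : ℝ → ℝ≥0∞} (hh : Measurable h) :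
    ∫⁻ z : Fin (n + 1) → ℝ, (∑ i, ENNReal.ofReal (z i ^ k)) * h (∑ j, z j) ∂μ₊ =
      (n + 1) * ∫⁻ t in Ici 0, ENNReal.ofReal (k ! / (n + k)! * t ^ (n + k)) * h t := by
  simp_rw [Finset.sum_mul]
  rw [lintegral_finsetSum _ fun i _ => by fun_prop]
  simp [lintegral_pow_mul_sum n k _ hh]

theorem integral_Ioi_pow_mul_exp_neg_sq (m : ℕ) :
    ∫ t in Ioi 0, t ^ m * exp (-t ^ 2) = Gamma ((m + 1) / 2) / 2 := by
  have := integral_rpow_mul_exp_neg_rpow two_pos (q := m) (by linarith [m.cast_nonneg (α := ℝ)])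
  simp_rw [rpow_natCast, rpow_two] at this
  rw [this]
  ring

theorem integrableOn_Ioi_pow_mul_exp_neg_sq (m : ℕ) :
    IntegrableOn (fun t : ℝ => t ^ m * exp (-t ^ 2)) (Ioi 0) := by
  have := integrableOn_rpow_mul_exp_neg_rpow (s := m) (by linarith [m.cast_nonneg (α := ℝ)])
    two_pos
  simpa [rpow_natCast, rpow_two] using this

theorem lintegral_Ici_ofReal_mul_pow_mul_exp_neg_sq {c : ℝ} (hc : 0 ≤ c) (m : ℕ) :
    ∫⁻ t in Ici 0, ENNReal.ofReal (c * t ^ m) * ENNReal.ofReal (exp (-t ^ 2)) =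
      ENNReal.ofReal (c * (Gamma ((m + 1) / 2) / 2)) := by
  rw [← integral_Ioi_pow_mul_exp_neg_sq, ← integral_const_mul, ← integral_Ici_eq_integral_Ioi,
    ofReal_integral_eq_lintegral_ofReal]
  · refine setLIntegral_congr_fun measurableSet_Ici fun t _ => ?_
    rw [← ENNReal.ofReal_mul' (exp_nonneg _), mul_assoc]
  · exact ((integrableOn_Ici_iff_integrableOn_Ioi).2
      (integrableOn_Ioi_pow_mul_exp_neg_sq m)).const_mul c
  · exact ae_restrict_of_forall_mem measurableSet_Ici fun t (ht : 0 ≤ t) => by positivity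

theorem orthant_integral_sum_squares_general (d : ℕ) :
    ∫ y in {y : Fin d → ℝ | ∀ i, 0 ≤ y i},
        (∑ i, (y i) ^ 2) * Real.exp (-(∑ i, y i) ^ 2) =
      (d : ℝ) ^ 2 * Real.Gamma ((d : ℝ) / 2) / (2 * (Nat.factorial (d + 1))) := by
  rcases d with _ | n
  · simp
  have hsplit : ∀ y : Fin (n + 1) → ℝ,
      ENNReal.ofReal ((∑ i, y i ^ 2) * exp (-(∑ i, y i) ^ 2)) =
        (∑ i, ENNReal.ofReal (y i ^ 2)) * ENNReal.ofReal (exp (-(∑ j, y j) ^ 2)) := fun y => by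
    rw [ENNReal.ofReal_mul (by positivity), ENNReal.ofReal_sum_of_nonneg fun i _ => by positivity]
  have hGamma : Gamma ((((n + 2 : ℕ) : ℝ) + 1) / 2) = (n + 1) / 2 * Gamma ((n + 1) / 2) := by
    rw [← Gamma_add_one (by positivity)]; push_cast; ring_nf
  rw [integral_eq_lintegral_of_nonneg_ae (.of_forall fun y => by positivity) (by fun_prop),
    volume_restrict_orthant, lintegral_congr hsplit, lintegral_sum_pow_mul_sum n 2
      (h := fun t => ENNReal.ofReal (exp (-t ^ 2))) (by fun_prop),
    lintegral_Ici_ofReal_mul_pow_mul_exp_neg_sq (by positivity), ENNReal.toReal_mul,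
    ENNReal.toReal_ofReal (by positivity), hGamma, ENNReal.toReal_add (by simp) (by simp),
    ENNReal.toReal_natCast, ENNReal.toReal_one, Nat.factorial_two]
  push_cast
  field_simp

theorem orthant_integral_sum_squares (d : ℕ) (hd : 1 ≤ d) :
    ∫ y in {y : Fin d → ℝ | ∀ i, 0 ≤ y i},
        (∑ i, (y i) ^ 2) * Real.exp (-(∑ i, y i) ^ 2) =
      (d : ℝ) ^ 2 * Real.Gamma ((d : ℝ) / 2) / (2 * (Nat.factorial (d + 1))) :=
  orthant_integral_sum_squares_general d
end

section
/- For d ≥ 2 and indices i ≠ j in {1,…,d}, the integral over the positive orthant ℝ₊^d of y_i·y_j·exp(−(∑_{k=1}^d y_k)²) dy equals Γ(d/2) / (4·(d+1)·(d−1)!). -/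
/-!
Write `y i * y j` as `∏ k, y k ^ a k` with `a = 𝟙_{i,j}` and use the Dirichlet formula
`∫_{ℝ₊^(n+1)} ∏ y_k^{a_k} g(∑ y_k) dy = ∏ a_k! / (∑ a_k + n)! · ∫₀^∞ s^(∑ a_k + n) g(s) ds`,
proved by induction on `n`: splitting off the first coordinate and substituting `u = t + s`
reduces the inductive step to the Beta integral `∫₀^u t^k (u-t)^m dt = k! m! u^(k+m+1)/(k+m+1)!`.
Here this gives `1/(d+1)! · ∫₀^∞ s^(d+1) e^(-s²) ds = Γ(d/2 + 1)/(2 (d+1)!)`.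
-/

open MeasureTheory Real Set Nat
open scoped ENNReal

theorem integral_pow_mul_sub_pow (k n : ℕ) {u : ℝ} (hu : 0 < u) :
    ∫ t in (0 : ℝ)..u, t ^ k * (u - t) ^ n = (k ! * n ! / (k + n + 1)! : ℝ) * u ^ (k + n + 1) := by
  have hre : ∀ m : ℕ, 0 < ((m : ℂ) + 1).re := fun m ↦ by
    rw [Complex.add_re, Complex.natCast_re, Complex.one_re]; positivity
  have h := Complex.betaIntegral_scaled (k + 1) (n + 1) hu
  rw [Complex.betaIntegral_eq_Gamma_mul_div _ _ (hre k) (hre n),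
    Complex.Gamma_nat_eq_factorial, Complex.Gamma_nat_eq_factorial,
    show (k + 1 + (n + 1) : ℂ) = ((k + n + 1 : ℕ) : ℂ) + 1 by push_cast; ring,
    Complex.Gamma_nat_eq_factorial] at h
  simp only [add_sub_cancel_right, Complex.cpow_natCast] at h
  apply Complex.ofReal_injective
  push_cast [← intervalIntegral.integral_ofReal, h]
  ring

theorem lintegral_Ioo_pow_mul_sub_pow (k n : ℕ) {u : ℝ} (hu : 0 < u) :
    ∫⁻ t in Ioo 0 u, ENNReal.ofReal t ^ k * ENNReal.ofReal (u - t) ^ n =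
      ENNReal.ofReal ((k ! * n ! / (k + n + 1)! : ℝ) * u ^ (k + n + 1)) := by
  have hnonneg : ∀ t ∈ Ioo 0 u, 0 ≤ t ^ k * (u - t) ^ n := fun t ht ↦
    mul_nonneg (pow_nonneg ht.1.le _) (pow_nonneg (sub_nonneg.2 ht.2.le) _)
  rw [← integral_pow_mul_sub_pow k n hu, intervalIntegral.integral_of_le hu.le,
    integral_Ioc_eq_integral_Ioo, ofReal_integral_eq_lintegral_ofReal
      ((by fun_prop : Continuous fun t : ℝ ↦ t ^ k * (u - t) ^ n).integrableOn_Icc.mono_set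
        Ioo_subset_Icc_self)
      ((ae_restrict_iff' measurableSet_Ioo).2 (ae_of_all _ hnonneg))]
  refine setLIntegral_congr_fun measurableSet_Ioo fun t ht ↦ ?_
  rw [ENNReal.ofReal_mul (pow_nonneg ht.1.le _), ENNReal.ofReal_pow ht.1.le,
    ENNReal.ofReal_pow (sub_nonneg.2 ht.2.le)]

theorem lintegral_Ioi_comp_add (f : ℝ → ℝ≥0∞) (t : ℝ) :
    ∫⁻ s in Ioi 0, f (t + s) = ∫⁻ u in Ioi t, f u := by
  have := (measurePreserving_add_left volume t).setLIntegral_comp_preimage_emb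
    (measurableEmbedding_addLeft t) f (Ioi t)
  rwa [preimage_const_add_Ioi, sub_self] at this

theorem lintegral_Ioi_pow_mul_lintegral_Ioi_pow_mul_add (k n : ℕ) {g : ℝ → ℝ≥0∞}
    (hg : Measurable g) :
    ∫⁻ t in Ioi 0, ENNReal.ofReal t ^ k * ∫⁻ s in Ioi 0, ENNReal.ofReal s ^ n * g (t + s) =
      ENNReal.ofReal (k ! * n ! / (k + n + 1)! : ℝ) *
        ∫⁻ u in Ioi 0, ENNReal.ofReal u ^ (k + n + 1) * g u := by
  -- Tonelli on the region `0 < t < u`, after substituting `u = t + s` in the inner integral.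
  set w : ℝ × ℝ → ℝ≥0∞ := fun p ↦ ENNReal.ofReal p.1 ^ k * ENNReal.ofReal (p.2 - p.1) ^ n * g p.2
  set F : ℝ → ℝ → ℝ≥0∞ := fun t u ↦ {p : ℝ × ℝ | p.1 < p.2}.indicator w (t, u)
  have hF : Measurable (Function.uncurry F) :=
    (by fun_prop : Measurable w).indicator (measurableSet_lt measurable_fst measurable_snd)
  have inner_t : ∀ t ∈ Ioi (0 : ℝ), ENNReal.ofReal t ^ k *
      ∫⁻ s in Ioi 0, ENNReal.ofReal s ^ n * g (t + s) = ∫⁻ u in Ioi 0, F t u := by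
    intro t ht
    calc _ = ENNReal.ofReal t ^ k * ∫⁻ u in Ioi t, ENNReal.ofReal (u - t) ^ n * g u := by
          simp_rw [← lintegral_Ioi_comp_add _ t, add_sub_cancel_left]
      _ = ∫⁻ u in Ioi t, w (t, u) := by
          simp_rw [w, mul_assoc]
          exact (lintegral_const_mul' _ _ (by simp)).symm
      _ = ∫⁻ u in Ioi 0, (Ioi t).indicator (fun u ↦ w (t, u)) u := by
          rw [setLIntegral_indicator measurableSet_Ioi, Ioi_inter_Ioi, max_eq_left ht.le]
  have inner_u : ∀ u ∈ Ioi (0 : ℝ), ∫⁻ t in Ioi 0, F t u =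
      ENNReal.ofReal (k ! * n ! / (k + n + 1)! : ℝ) * (ENNReal.ofReal u ^ (k + n + 1) * g u) := by
    intro u hu
    calc ∫⁻ t in Ioi 0, F t u = ∫⁻ t in Ioi 0, (Iio u).indicator (fun t ↦ w (t, u)) t := rfl
      _ = (∫⁻ t in Ioo 0 u, ENNReal.ofReal t ^ k * ENNReal.ofReal (u - t) ^ n) * g u := by
          rw [setLIntegral_indicator measurableSet_Iio, Iio_inter_Ioi,
            ← lintegral_mul_const _ (by fun_prop)]
      _ = _ := by
          rw [lintegral_Ioo_pow_mul_sub_pow k n hu, ENNReal.ofReal_mul (by positivity),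
            ENNReal.ofReal_pow (le_of_lt hu), mul_assoc]
  rw [setLIntegral_congr_fun measurableSet_Ioi inner_t, lintegral_lintegral_swap
    hF.aemeasurable, setLIntegral_congr_fun measurableSet_Ioi inner_u,
    lintegral_const_mul _ (by fun_prop)]

theorem lintegral_Ici_zero_eq_lintegral_lintegral_cons {n : ℕ} (f : (Fin (n + 1) → ℝ) → ℝ≥0∞)
    (hf : Measurable f) :
    ∫⁻ y in Ici 0, f y = ∫⁻ t in Ioi 0, ∫⁻ z in Ici 0, f (Fin.cons t z) := by
  set e := MeasurableEquiv.piFinSuccAbove (fun _ : Fin (n + 1) ↦ ℝ) 0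
  have he : ∀ p, e.symm p = Fin.cons p.1 p.2 := fun p ↦ by
    simp [e, MeasurableEquiv.piFinSuccAbove_symm_apply, Fin.insertNthEquiv]
  have hpre : e.symm ⁻¹' Ici 0 = Ici 0 ×ˢ Ici 0 := by
    ext ⟨t, z⟩
    simp [he, Pi.le_def, Fin.forall_fin_succ]
  rw [← ((volume_preserving_piFinSuccAbove (fun _ ↦ ℝ) 0).symm e).setLIntegral_comp_preimage_emb
    e.symm.measurableEmbedding, hpre, Measure.volume_eq_prod, ← Measure.prod_restrict,
    lintegral_prod (fun p ↦ f (e.symm p)) (hf.comp e.symm.measurable).aemeasurable,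
    Measure.restrict_congr_set Ioi_ae_eq_Ici.symm]
  simp only [he]

theorem lintegral_Ici_prod_pow_mul_comp_sum {n : ℕ} (a : Fin (n + 1) → ℕ) {g : ℝ → ℝ≥0∞}
    (hg : Measurable g) :
    ∫⁻ y in Ici (0 : Fin (n + 1) → ℝ), (∏ k, ENNReal.ofReal (y k) ^ a k) * g (∑ k, y k) =
      ENNReal.ofReal ((∏ k, ((a k)! : ℝ)) / (∑ k, a k + n)!) *
        ∫⁻ s in Ioi 0, ENNReal.ofReal s ^ (∑ k, a k + n) * g s := by
  induction n generalizing g with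
  | zero =>
    rw [lintegral_Ici_zero_eq_lintegral_lintegral_cons]
    · have : volume (Ici (0 : Fin 0 → ℝ)) = 1 := by
        rw [show Ici (0 : Fin 0 → ℝ) = univ from
            eq_univ_of_forall fun y ↦ (Subsingleton.elim 0 y).le, volume_pi, Measure.pi_empty_univ]
      have hfac : ((a 0)! : ℝ) ≠ 0 := by positivity
      simp [this, -Matrix.zero_empty, hfac]
    · fun_prop
  | succ n ih =>
    rw [lintegral_Ici_zero_eq_lintegral_lintegral_cons]
    · have inner : ∀ t : ℝ, ∫⁻ z in Ici (0 : Fin (n + 1) → ℝ),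
          (∏ k, ENNReal.ofReal ((Fin.cons t z : Fin (n + 2) → ℝ) k) ^ a k) *
            g (∑ k, (Fin.cons t z : Fin (n + 2) → ℝ) k) =
            ENNReal.ofReal
                ((∏ k : Fin (n + 1), ((a k.succ)! : ℝ)) / (∑ k : Fin (n + 1), a k.succ + n)!) *
              (ENNReal.ofReal t ^ a 0 * ∫⁻ s in Ioi 0,
                ENNReal.ofReal s ^ (∑ k : Fin (n + 1), a k.succ + n) * g (t + s)) := by
        intro t
        simp only [Fin.prod_univ_succ (n := n + 1), Fin.sum_univ_succ (n := n + 1), Fin.cons_zero,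
          Fin.cons_succ, mul_assoc]
        rw [lintegral_const_mul' _ _ (by simp),
          ih (fun k ↦ a k.succ) (g := fun s ↦ g (t + s)) (by fun_prop), mul_left_comm]
      rw [lintegral_congr inner, lintegral_const_mul' _ _ ENNReal.ofReal_ne_top,
        lintegral_Ioi_pow_mul_lintegral_Ioi_pow_mul_add _ _ hg, ← mul_assoc,
        ← ENNReal.ofReal_mul (by positivity), Fin.sum_univ_succ (n := n + 1),
        Fin.prod_univ_succ (n := n + 1),
        show a 0 + (∑ k : Fin (n + 1), a k.succ + n) + 1 =
          a 0 + ∑ k : Fin (n + 1), a k.succ + (n + 1) by ring]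
      congr 2
      field_simp
    · fun_prop

theorem lintegral_Ioi_pow_mul_exp_neg_sq (n : ℕ) :
    ∫⁻ s in Ioi 0, ENNReal.ofReal s ^ n * ENNReal.ofReal (exp (-s ^ 2)) =
      ENNReal.ofReal (Gamma ((n + 1) / 2) / 2) := by
  have hq : (-1 : ℝ) < n := by linarith [n.cast_nonneg (α := ℝ)]
  have h := integral_rpow_mul_exp_neg_rpow two_pos hq
  have hi := integrableOn_rpow_mul_exp_neg_rpow hq two_pos
  simp only [rpow_natCast, rpow_ofNat] at h hi
  rw [← one_div_mul_eq_div, ← h, ofReal_integral_eq_lintegral_ofReal hi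
    ((ae_restrict_iff' measurableSet_Ioi).2 (ae_of_all _ fun s (_ : 0 < s) ↦ by positivity))]
  refine setLIntegral_congr_fun measurableSet_Ioi fun s hs ↦ ?_
  rw [ENNReal.ofReal_mul (pow_nonneg (le_of_lt hs) _), ENNReal.ofReal_pow (le_of_lt hs)]

theorem lintegral_Ici_mul_mul_comp_sum {n : ℕ} {i j : Fin (n + 1)} (hij : i ≠ j)
    {g : ℝ → ℝ≥0∞} (hg : Measurable g) :
    ∫⁻ y in Ici (0 : Fin (n + 1) → ℝ),
        ENNReal.ofReal (y i) * ENNReal.ofReal (y j) * g (∑ k, y k) =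
      ENNReal.ofReal (1 / (n + 2)! : ℝ) * ∫⁻ s in Ioi 0, ENNReal.ofReal s ^ (n + 2) * g s := by
  set a : Fin (n + 1) → ℕ := fun k ↦ if k = i ∨ k = j then 1 else 0
  have ha : ∀ k, k ≠ i ∧ k ≠ j → a k = 0 := fun k hk ↦ by simp [a, hk.1, hk.2]
  have hprod : ∀ y : Fin (n + 1) → ℝ, ∏ k, ENNReal.ofReal (y k) ^ a k =
      ENNReal.ofReal (y i) * ENNReal.ofReal (y j) := fun y ↦ by
    rw [Fintype.prod_eq_mul i j hij fun k hk ↦ by rw [ha k hk, pow_zero]]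
    simp [a]
  have hsum : ∑ k, a k = 2 := by
    rw [Fintype.sum_eq_add i j hij ha]
    simp [a]
  have hfact : ∏ k, ((a k)! : ℝ) = 1 :=
    Finset.prod_eq_one fun k _ ↦ by by_cases hk : k = i ∨ k = j <;> simp [a, hk]
  simp_rw [← hprod]
  rw [lintegral_Ici_prod_pow_mul_comp_sum a hg, hsum, hfact, add_comm 2 n]

theorem orthant_integral_mixed_general (d : ℕ) (i j : Fin d) (hij : i ≠ j) :
    ∫ y in {y : Fin d → ℝ | ∀ i, 0 ≤ y i},
        y i * y j * Real.exp (-(∑ k, y k) ^ 2) =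
      Real.Gamma ((d : ℝ) / 2) / (4 * (d + 1) * (Nat.factorial (d - 1))) := by
  obtain ⟨n, rfl⟩ := Nat.exists_eq_add_one_of_ne_zero i.pos.ne'
  have horthant : {y : Fin (n + 1) → ℝ | ∀ i, 0 ≤ y i} = Ici 0 := by ext y; simp [Pi.le_def]
  have hnonneg : ∀ y : Fin (n + 1) → ℝ, 0 ≤ y → 0 ≤ y i * y j * exp (-(∑ k, y k) ^ 2) :=
    fun y hy ↦ mul_nonneg (mul_nonneg (hy i) (hy j)) (exp_nonneg _)
  have hweight : ∀ y ∈ Ici (0 : Fin (n + 1) → ℝ),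
      ENNReal.ofReal (y i * y j * exp (-(∑ k, y k) ^ 2)) =
        ENNReal.ofReal (y i) * ENNReal.ofReal (y j) * ENNReal.ofReal (exp (-(∑ k, y k) ^ 2)) :=
    fun y hy ↦ by rw [ENNReal.ofReal_mul (mul_nonneg (hy i) (hy j)), ENNReal.ofReal_mul (hy i)]
  rw [horthant, integral_eq_lintegral_of_nonneg_ae
      ((ae_restrict_iff' measurableSet_Ici).2 (ae_of_all _ hnonneg))
      (by fun_prop : Continuous _).aestronglyMeasurable,
    setLIntegral_congr_fun measurableSet_Ici hweight,
    lintegral_Ici_mul_mul_comp_sum hij (g := fun s ↦ ENNReal.ofReal (exp (-s ^ 2))) (by fun_prop),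
    lintegral_Ioi_pow_mul_exp_neg_sq, ← ENNReal.ofReal_mul (by positivity),
    ENNReal.toReal_ofReal (by positivity), add_tsub_cancel_right, factorial_succ, factorial_succ]
  push_cast
  rw [show ((n : ℝ) + 2 + 1) / 2 = (n + 1) / 2 + 1 by ring, Gamma_add_one (by positivity)]
  field_simp
  ring

theorem orthant_integral_mixed (d : ℕ) (hd : 2 ≤ d) (i j : Fin d) (hij : i ≠ j) :
    ∫ y in {y : Fin d → ℝ | ∀ i, 0 ≤ y i},
        y i * y j * Real.exp (-(∑ k, y k) ^ 2) =
      Real.Gamma ((d : ℝ) / 2) / (4 * (d + 1) * (Nat.factorial (d - 1))) :=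
  orthant_integral_mixed_general d i j hij
end

section
/- For every x > 0 there exists θ with 0 < θ < 1 such that Γ(x+1) = √(2π) · x^{x+1/2} · exp(−x + θ/(12x)). -/
/-!
Write `Γ(x+1) = √(2π) x^(x+1/2) exp(-x + R(x))`. The functional equation of `Γ` gives
`R(x) - R(x+1) = (x + 1/2) log(1 + 1/x) - 1 = ∑_{k ≥ 1} r^k / (2k+1)` with `r = (2x+1)⁻²`,
which lies strictly between `0` and `∑_{k ≥ 1} r^k / 3 = 1/(12x) - 1/(12(x+1))`.
Euler's limit formula for `Γ` and Stirling's formula for `n!` give `R(x+n) → 0`, so both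
`R(x+n)` and `1/(12(x+n)) - R(x+n)` decrease strictly to `0`. Hence `0 < R(x) < 1/(12x)`,
and `θ = 12 x R(x)`.
-/

open Real Filter Topology

lemma hasSum_mul_log_one_add_inv_sub_one {x : ℝ} (hx : 0 < x) :
    HasSum (fun k : ℕ => ((1 / (2 * x + 1)) ^ 2) ^ (k + 1) / (2 * (k + 1) + 1))
      ((x + 1 / 2) * log (1 + x⁻¹) - 1) := by
  have h := (hasSum_log_one_add_inv hx).mul_left (x + 1 / 2)
  rw [← hasSum_nat_add_iff' 1, Finset.sum_range_one] at h
  have : 2 * x + 1 ≠ 0 := by positivity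
  convert! h using 1
  · ext k
    rw [← pow_mul, pow_succ _ (2 * (k + 1))]
    push_cast
    field
  · simp only [Nat.cast_zero, mul_zero, zero_add, pow_one]
    field

lemma mul_log_one_add_inv_sub_one_pos {x : ℝ} (hx : 0 < x) :
    0 < (x + 1 / 2) * log (1 + x⁻¹) - 1 :=
  hasSum_lt (i := 0) (fun k => by positivity) (by positivity) hasSum_zero
    (hasSum_mul_log_one_add_inv_sub_one hx)

lemma mul_log_one_add_inv_sub_one_lt {x : ℝ} (hx : 0 < x) :
    (x + 1 / 2) * log (1 + x⁻¹) - 1 < 1 / (12 * x) - 1 / (12 * (x + 1)) := by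
  set r := (1 / (2 * x + 1)) ^ 2 with hr
  have hr0 : 0 < r := by positivity
  have hr1 : r < 1 := by
    rw [hr, div_pow, one_pow, div_lt_one (by positivity)]
    nlinarith
  have hgeom : HasSum (fun k : ℕ => r ^ (k + 1) / 3) (r / (1 - r) / 3) := by
    simpa only [← pow_succ', div_eq_mul_inv, mul_assoc] using
      ((hasSum_geometric_of_lt_one hr0.le hr1).mul_left r).div_const 3
  have hgeom_eq : r / (1 - r) / 3 = 1 / (12 * x) - 1 / (12 * (x + 1)) := by
    have : 1 - r = 4 * x * (x + 1) / (2 * x + 1) ^ 2 := by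
      rw [hr]
      field
    rw [this, hr]
    field
  rw [← hgeom_eq]
  refine hasSum_lt (i := 1) (fun k => ?_) ?_ (hasSum_mul_log_one_add_inv_sub_one hx) hgeom
  · gcongr
    linarith [k.cast_nonneg (α := ℝ)]
  · gcongr
    norm_num

noncomputable def stirlingRemainder (x : ℝ) : ℝ :=
  log (Gamma (x + 1)) - ((x + 1 / 2) * log x - x + log √(2 * π))

lemma Gamma_add_one_eq_stirlingRemainder {x : ℝ} (hx : 0 < x) :
    Gamma (x + 1) = √(2 * π) * x ^ (x + 1 / 2) * exp (-x + stirlingRemainder x) := by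
  rw [rpow_def_of_pos hx, ← exp_log (by positivity : 0 < √(2 * π)), ← exp_add, ← exp_add,
    ← exp_log (Gamma_pos_of_pos (by positivity : 0 < x + 1)), stirlingRemainder]
  congr 1
  ring

lemma stirlingRemainder_sub_stirlingRemainder_add_one {x : ℝ} (hx : 0 < x) :
    stirlingRemainder x - stirlingRemainder (x + 1) = (x + 1 / 2) * log (1 + x⁻¹) - 1 := by
  have hx1 : 0 < x + 1 := by positivity
  have h : 1 + x⁻¹ = (x + 1) / x := by field
  rw [stirlingRemainder, stirlingRemainder, Gamma_add_one hx1.ne',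
    log_mul hx1.ne' (Gamma_pos_of_pos hx1).ne', h, log_div hx1.ne' hx.ne']
  ring

lemma tendsto_stirlingRemainder_natCast :
    Tendsto (fun n : ℕ => stirlingRemainder n) atTop (𝓝 0) := by
  have h := ((continuousAt_log (by positivity : √π ≠ 0)).tendsto.comp
    Stirling.tendsto_stirlingSeq_sqrt_pi).sub_const (log √π)
  rw [sub_self] at h
  refine h.congr' (eventually_ne_atTop 0 |>.mono fun n hn => ?_)
  have hn' : (n : ℝ) ≠ 0 := Nat.cast_ne_zero.2 hn
  simp only [Function.comp_apply, Stirling.log_stirlingSeq_formula, stirlingRemainder,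
    Gamma_nat_eq_factorial]
  rw [log_mul two_ne_zero hn', log_div hn' (exp_ne_zero 1), log_exp,
    log_sqrt (by positivity : (0 : ℝ) ≤ 2 * π), log_sqrt pi_pos.le,
    log_mul two_ne_zero pi_pos.ne']
  ring

lemma log_Gamma_add_nat {x : ℝ} (hx : 0 < x) (n : ℕ) :
    log (Gamma (x + n)) = log (Gamma x) + ∑ m ∈ Finset.range n, log (x + m) :=
  BohrMollerup.f_add_nat_eq (f := log ∘ Gamma) (fun {y} hy => by
    rw [Function.comp_apply, Gamma_add_one hy.ne', log_mul hy.ne' (Gamma_pos_of_pos hy).ne',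
      add_comm, Function.comp_apply]) hx n

lemma tendsto_log_Gamma_add_nat_add_one_sub {x : ℝ} (hx : 0 < x) :
    Tendsto (fun n : ℕ => log (Gamma (x + n + 1)) - log n.factorial - x * log n) atTop
      (𝓝 0) := by
  have h := (BohrMollerup.tendsto_log_gamma hx).const_sub (log (Gamma x))
  rw [sub_self] at h
  refine h.congr fun n => ?_
  rw [BohrMollerup.logGammaSeq, add_assoc, ← Nat.cast_add_one, log_Gamma_add_nat hx]
  ring

lemma tendsto_mul_log_add_sub_log (x : ℝ) :
    Tendsto (fun n : ℕ => (x + n + 1 / 2) * (log (x + n) - log n)) atTop (𝓝 x) := by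
  have hlog : Tendsto (fun n : ℕ => log (1 + x / n)) atTop (𝓝 0) := by
    have h := (tendsto_const_div_atTop_nhds_zero_nat x).const_add 1
    rw [add_zero] at h
    simpa [Function.comp_def] using (continuousAt_log one_ne_zero).tendsto.comp h
  have h := ((tendsto_mul_log_one_add_div_atTop x).comp tendsto_natCast_atTop_atTop).add
    (hlog.const_mul (x + 1 / 2))
  rw [mul_zero, add_zero] at h
  refine h.congr' (((eventually_gt_atTop 0).and
    (tendsto_natCast_atTop_atTop.eventually_gt_atTop (-x))).mono fun n ⟨hn, hxn⟩ => ?_)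
  have hn' : (0 : ℝ) < n := Nat.cast_pos.2 hn
  have h : 1 + x / n = (x + n) / n := by field
  rw [Function.comp_apply, h, log_div (by linarith) hn'.ne']
  ring

lemma tendsto_stirlingRemainder_add_nat {x : ℝ} (hx : 0 < x) :
    Tendsto (fun n : ℕ => stirlingRemainder (x + n)) atTop (𝓝 0) := by
  have h := (tendsto_stirlingRemainder_natCast.add
    (tendsto_log_Gamma_add_nat_add_one_sub hx)).sub ((tendsto_mul_log_add_sub_log x).sub_const x)
  rw [add_zero, sub_self, sub_zero] at h
  refine h.congr fun n => ?_
  rw [stirlingRemainder, stirlingRemainder, Gamma_nat_eq_factorial, add_assoc]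
  ring

lemma pos_of_add_one_lt_of_tendsto_add_nat {F : ℝ → ℝ} {x : ℝ} (hx : 0 < x)
    (hF : ∀ y, 0 < y → F (y + 1) < F y) (hlim : Tendsto (fun n : ℕ => F (x + n)) atTop (𝓝 0)) :
    0 < F x := by
  have hanti : StrictAnti fun n : ℕ => F (x + n) :=
    strictAnti_nat_of_succ_lt fun n => by
      simpa only [Nat.cast_add_one, ← add_assoc] using hF (x + n) (by positivity)
  simpa using (hanti.antitone.le_of_tendsto hlim 1).trans_lt (hanti zero_lt_one)

lemma stirlingRemainder_pos {x : ℝ} (hx : 0 < x) : 0 < stirlingRemainder x := by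
  refine pos_of_add_one_lt_of_tendsto_add_nat hx (fun y hy => ?_)
    (tendsto_stirlingRemainder_add_nat hx)
  have := stirlingRemainder_sub_stirlingRemainder_add_one hy
  have := mul_log_one_add_inv_sub_one_pos hy
  linarith

lemma stirlingRemainder_lt {x : ℝ} (hx : 0 < x) : stirlingRemainder x < 1 / (12 * x) := by
  have hlim : Tendsto (fun n : ℕ => 1 / (12 * (x + n))) atTop (𝓝 0) :=
    tendsto_const_nhds.div_atTop <|
      (tendsto_atTop_add_const_left _ x tendsto_natCast_atTop_atTop).const_mul_atTop (by norm_num)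
  have hlim' := hlim.sub (tendsto_stirlingRemainder_add_nat hx)
  rw [sub_zero] at hlim'
  refine sub_pos.1 <| pos_of_add_one_lt_of_tendsto_add_nat
    (F := fun y => 1 / (12 * y) - stirlingRemainder y) hx (fun y hy => ?_) hlim'
  have := stirlingRemainder_sub_stirlingRemainder_add_one hy
  have := mul_log_one_add_inv_sub_one_lt hy
  linarith

theorem stirling_with_error (x : ℝ) (hx : 0 < x) :
    ∃ θ : ℝ, 0 < θ ∧ θ < 1 ∧
      Real.Gamma (x + 1) =
        Real.sqrt (2 * π) * x ^ (x + 1 / 2) * Real.exp (-x + θ / (12 * x)) := by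
  have hpos := stirlingRemainder_pos hx
  have hlt := stirlingRemainder_lt hx
  refine ⟨12 * x * stirlingRemainder x, by positivity, ?_, ?_⟩
  · rw [lt_div_iff₀ (by positivity)] at hlt
    linarith
  · rw [mul_div_cancel_left₀ _ (by positivity)]
    exact Gamma_add_one_eq_stirlingRemainder hx
end

section
/- Let A be a measurable subset of the Euclidean unit ball B₂^d whose center of gravity is contained in some cap of B₂^d of height Δ ≤ 1. Then there exists a cap C of B₂^d of height 2Δ such that 2·vol_d(C ∩ A) ≥ vol_d(A). -/
/-!
On the unit ball the function `g z = 1 - ⟪z, ξ⟫` is nonnegative, and the centroid hypothesis says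
that its mean over `A` is at most `Δ`. By Markov's inequality the part of `A` where `g > 2Δ` carries
at most half of the measure of `A`, and the rest of `A` is exactly `A` intersected with the cap of
height `2Δ` in the direction `ξ`.
-/

open MeasureTheory RealInnerProductSpace Set

section Markov

variable {α : Type*} [MeasurableSpace α] {μ : Measure α} [IsFiniteMeasure μ] {g : α → ℝ} {c : ℝ}

theorem two_mul_measureReal_lt_le_measureReal_univ (hg : Integrable g μ) (hg0 : 0 ≤ᵐ[μ] g)
    (hgc : ∫ x, g x ∂μ ≤ c * μ.real univ) :
    2 * μ.real {x | 2 * c < g x} ≤ μ.real univ := by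
  set T := {x | 2 * c < g x}
  rcases eq_or_ne (μ T) 0 with hT | hT
  · simp [Measure.real, hT]
  have hc : 0 ≤ c := by
    have hpos : 0 < μ.real univ :=
      ENNReal.toReal_pos (fun h => hT (measure_mono_null (subset_univ T) h)) (measure_ne_top μ _)
    nlinarith [integral_nonneg_of_ae hg0]
  -- The strict form of Markov's inequality also covers `c = 0`.
  have hT_int : μ.real T * (2 * c) < c * μ.real univ :=
    calc μ.real T * (2 * c) < ∫ x in T, g x ∂μ := setIntegral_gt_gt (by positivity) hg.integrableOn hT
      _ ≤ ∫ x, g x ∂μ := setIntegral_le_integral hg hg0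
      _ ≤ c * μ.real univ := hgc
  nlinarith [measureReal_mono (μ := μ) (subset_univ T)]

theorem measure_univ_le_two_mul_measure_setOf_le (hgm : Measurable g) (hg : Integrable g μ)
    (hg0 : 0 ≤ᵐ[μ] g) (hgc : ∫ x, g x ∂μ ≤ c * μ.real univ) :
    μ univ ≤ 2 * μ {x | g x ≤ 2 * c} := by
  have hS : MeasurableSet {x | g x ≤ 2 * c} := measurableSet_le hgm measurable_const
  have hcompl : {x | g x ≤ 2 * c}ᶜ = {x | 2 * c < g x} := by
    ext x; simp
  have key := two_mul_measureReal_lt_le_measureReal_univ hg hg0 hgc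
  rw [← hcompl, measureReal_compl hS] at key
  rw [← ENNReal.toReal_le_toReal (measure_ne_top μ _) (by finiteness), ENNReal.toReal_mul,
    ENNReal.toReal_ofNat]
  change μ.real univ ≤ 2 * μ.real {x | g x ≤ 2 * c}
  linarith

end Markov

section Cap

variable {E : Type*} [NormedAddCommGroup E] [InnerProductSpace ℝ E] {A : Set E} {ξ : E}

theorem inner_le_one_of_mem_closedBall {z : E} (hz : z ∈ Metric.closedBall 0 1) (hξ : ‖ξ‖ = 1) :
    ⟪z, ξ⟫ ≤ 1 :=
  calc ⟪z, ξ⟫ ≤ ‖z‖ * ‖ξ‖ := real_inner_le_norm z ξ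
    _ ≤ 1 := by rw [hξ, mul_one]; simpa using hz

theorem closedBall_inter_cap_inter_eq (hA : A ⊆ Metric.closedBall 0 1) (h : ℝ) :
    (Metric.closedBall 0 1 ∩ {z | 1 - h ≤ ⟪z, ξ⟫}) ∩ A = {z | 1 - ⟪z, ξ⟫ ≤ h} ∩ A := by
  ext z
  simp only [mem_inter_iff, mem_ofPred_eq]
  constructor
  · rintro ⟨⟨_, hz⟩, hzA⟩; exact ⟨by linarith, hzA⟩
  · rintro ⟨hz, hzA⟩; exact ⟨⟨hA hzA, by linarith⟩, hzA⟩

theorem setIntegral_one_sub_inner_le [CompleteSpace E] [MeasurableSpace E] {μ : Measure E}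
    {Δ : ℝ} (hμA : μ A ≠ 0) (hAfin : μ A ≠ ⊤) (hint : IntegrableOn (fun z => z) A μ)
    (hcg : 1 - Δ ≤ ⟪(μ A).toReal⁻¹ • ∫ z in A, z ∂μ, ξ⟫) :
    ∫ z in A, (1 - ⟪z, ξ⟫) ∂μ ≤ Δ * μ.real A := by
  have ha : 0 < μ.real A := ENNReal.toReal_pos hμA hAfin
  have hI : ∫ z in A, ⟪z, ξ⟫ ∂μ = ⟪∫ z in A, z ∂μ, ξ⟫ := by
    simpa only [real_inner_comm ξ] using integral_inner hint ξ
  rw [real_inner_smul_left, ← hI] at hcg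
  change 1 - Δ ≤ (μ.real A)⁻¹ * _ at hcg
  rw [le_inv_mul_iff₀ ha] at hcg
  rw [integral_sub (integrableOn_const hAfin : IntegrableOn (fun _ => (1 : ℝ)) A μ)
    (hint.inner_const ξ), setIntegral_const, smul_eq_mul, mul_one]
  linarith

end Cap

theorem cap_captures_half_of_set_general (d : ℕ)
    (A : Set (EuclideanSpace ℝ (Fin d)))
    (hAball : A ⊆ Metric.closedBall 0 1) (hA0 : volume A ≠ 0)
    (Δ : ℝ)
    (ξ : EuclideanSpace ℝ (Fin d)) (hξ : ‖ξ‖ = 1)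
    (hcg : 1 - Δ ≤ ⟪(volume A).toReal⁻¹ • ∫ z in A, z, ξ⟫) :
    ∃ η : EuclideanSpace ℝ (Fin d), ‖η‖ = 1 ∧
      volume A ≤
        2 * volume ((Metric.closedBall 0 1 ∩ {z | 1 - 2 * Δ ≤ ⟪z, η⟫}) ∩ A) := by
  have hAfin : volume A ≠ ⊤ := ((measure_mono hAball).trans_lt measure_closedBall_lt_top).ne
  have : IsFiniteMeasure (volume.restrict A) := isFiniteMeasure_restrict.2 hAfin
  have hint : IntegrableOn (fun z => z) A :=
    (continuous_id.continuousOn.integrableOn_compact (isCompact_closedBall 0 1)).mono_set hAball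
  set g : EuclideanSpace ℝ (Fin d) → ℝ := fun z => 1 - ⟪z, ξ⟫
  have hg : Continuous g := by fun_prop
  have hg0 : 0 ≤ᵐ[volume.restrict A] g :=
    ae_restrict_of_ae_restrict_of_subset hAball <| ae_restrict_of_forall_mem measurableSet_closedBall
      fun z hz => sub_nonneg.2 (inner_le_one_of_mem_closedBall hz hξ)
  have key := measure_univ_le_two_mul_measure_setOf_le hg.measurable
    ((hg.continuousOn.integrableOn_compact (isCompact_closedBall 0 1)).mono_set hAball) hg0
    (by simpa using setIntegral_one_sub_inner_le hA0 hAfin hint hcg)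
  refine ⟨ξ, hξ, ?_⟩
  rwa [Measure.restrict_apply_univ, Measure.restrict_apply (measurableSet_le hg.measurable
    measurable_const), ← closedBall_inter_cap_inter_eq hAball] at key

theorem cap_captures_half_of_set (d : ℕ) (hd : 1 ≤ d)
    (A : Set (EuclideanSpace ℝ (Fin d))) (hA : MeasurableSet A)
    (hAball : A ⊆ Metric.closedBall 0 1) (hA0 : volume A ≠ 0)
    (Δ : ℝ) (hΔ : Δ ≤ 1)
    (ξ : EuclideanSpace ℝ (Fin d)) (hξ : ‖ξ‖ = 1)
    (hcg : 1 - Δ ≤ ⟪(volume A).toReal⁻¹ • ∫ z in A, z, ξ⟫) :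
    ∃ η : EuclideanSpace ℝ (Fin d), ‖η‖ = 1 ∧
      volume A ≤
        2 * volume ((Metric.closedBall 0 1 ∩ {z | 1 - 2 * Δ ≤ ⟪z, η⟫}) ∩ A) :=
  cap_captures_half_of_set_general d A hAball hA0 Δ ξ hξ hcg
end

section
/- If x₁,…,x_n ∈ ∂B₂^d satisfy ‖x_i − x_j‖ ≥ θ for all i ≠ j and for every x ∈ ∂B₂^d there is an i with ‖x − x_i‖ ≤ θ, then the convex hull Q of {x₁,…,x_n} satisfies d_H(Q, B₂^d) ≤ θ²/2. -/
/-! If every unit vector `u` has a point `q` of a convex body `Q ⊆ B` with `⟪u, q⟫ ≥ 1 - δ`,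
then the nearest point `p ∈ Q` to any `z ∈ B` is within `δ` of `z`: with `u` the direction of
`z - p`, the projection inequality gives `⟪u, p⟫ ≥ ⟪u, q⟫ ≥ 1 - δ` while `⟪u, z⟫ ≤ 1`.
A `θ`-net of unit vectors provides such points with `δ = θ² / 2`, since
`‖u - v‖² = 2 - 2 ⟪u, v⟫` for unit vectors. -/

open MeasureTheory Metric Set
open scoped RealInnerProductSpace

variable {E : Type*} [NormedAddCommGroup E] [InnerProductSpace ℝ E]

lemma one_sub_sq_div_two_le_inner {u v : E} {θ : ℝ} (hu : ‖u‖ = 1) (hv : ‖v‖ = 1)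
    (huv : ‖u - v‖ ≤ θ) : 1 - θ ^ 2 / 2 ≤ ⟪u, v⟫ := by
  have hsq : ‖u - v‖ ^ 2 ≤ θ ^ 2 := pow_le_pow_left₀ (norm_nonneg _) huv 2
  have := norm_sub_sq_real u v
  rw [hu, hv] at this
  linarith

lemma infDist_le_of_forall_unit_exists_inner_ge {Q : Set E} (hQ : Convex ℝ Q)
    (hQc : IsComplete Q) (hQne : Q.Nonempty) {δ : ℝ} (hδ : 0 ≤ δ)
    (hsupp : ∀ u : E, ‖u‖ = 1 → ∃ q ∈ Q, 1 - δ ≤ ⟪u, q⟫) {z : E} (hz : ‖z‖ ≤ 1) :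
    infDist z Q ≤ δ := by
  obtain ⟨p, hpQ, hp⟩ := exists_norm_eq_iInf_of_complete_convex hQne hQc hQ z
  have hproj := (norm_eq_iInf_iff_real_inner_le_zero hQ hpQ).mp hp
  refine (infDist_le_dist_of_mem hpQ).trans ?_
  rw [dist_eq_norm]
  set v := z - p
  rcases eq_or_ne v 0 with hv | hv
  · simpa [hv] using hδ
  have hv' : 0 < ‖v‖ := norm_pos_iff.mpr hv
  obtain ⟨q, hqQ, hq⟩ := hsupp (‖v‖⁻¹ • v) (norm_smul_inv_norm hv)
  have hvq : (1 - δ) * ‖v‖ ≤ ⟪v, q⟫ := by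
    rw [real_inner_smul_left] at hq
    rwa [← le_inv_mul_iff₀' hv']
  have hqp : ⟪v, q⟫ ≤ ⟪v, p⟫ := by
    have := hproj q hqQ
    rw [inner_sub_right] at this
    linarith
  have hvz : ⟪v, z⟫ ≤ ‖v‖ :=
    (real_inner_le_norm v z).trans (mul_le_of_le_one_right (norm_nonneg v) hz)
  have hvv : ‖v‖ * ‖v‖ ≤ δ * ‖v‖ :=
    calc ‖v‖ * ‖v‖ = ⟪v, z⟫ - ⟪v, p⟫ := by
          rw [← real_inner_self_eq_norm_mul_norm, ← inner_sub_right]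
      _ ≤ δ * ‖v‖ := by linarith
  exact le_of_mul_le_mul_right hvv hv'

lemma hausdorffDist_closedBall_le_of_forall_unit_exists_inner_ge {Q : Set E}
    (hQ : Convex ℝ Q) (hQc : IsComplete Q) (hQball : Q ⊆ closedBall 0 1) {δ : ℝ}
    (hδ : 0 ≤ δ) (hsupp : ∀ u : E, ‖u‖ = 1 → ∃ q ∈ Q, 1 - δ ≤ ⟪u, q⟫) :
    hausdorffDist Q (closedBall 0 1) ≤ δ := by
  rcases Q.eq_empty_or_nonempty with rfl | hQne
  · simpa using hδ
  refine hausdorffDist_le_of_infDist hδ (fun q hq => ?_) (fun z hz => ?_)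
  · simpa [infDist_zero_of_mem (hQball hq)] using hδ
  · exact infDist_le_of_forall_unit_exists_inner_ge hQ hQc hQne hδ hsupp
      (mem_closedBall_zero_iff.mp hz)

theorem net_convex_hull_hausdorff_general (d n : ℕ) (θ : ℝ)
    (x : Fin n → EuclideanSpace ℝ (Fin d)) (hx : ∀ i, ‖x i‖ = 1)
    (hnet : ∀ z : EuclideanSpace ℝ (Fin d), ‖z‖ = 1 → ∃ i, ‖z - x i‖ ≤ θ) :
    Metric.hausdorffDist (convexHull ℝ (Set.range x))
        (Metric.closedBall (0 : EuclideanSpace ℝ (Fin d)) 1) ≤ θ ^ 2 / 2 := by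
  have hball : convexHull ℝ (range x) ⊆ closedBall 0 1 :=
    convexHull_min (range_subset_iff.mpr fun i => by simp [hx i]) (convex_closedBall _ _)
  refine hausdorffDist_closedBall_le_of_forall_unit_exists_inner_ge (convex_convexHull ℝ _)
    ((finite_range x).isCompact_convexHull (𝕜 := ℝ)).isClosed.isComplete hball (by positivity)
    fun u hu => ?_
  obtain ⟨i, hi⟩ := hnet u hu
  exact ⟨x i, subset_convexHull ℝ _ ⟨i, rfl⟩, one_sub_sq_div_two_le_inner hu (hx i) hi⟩

theorem net_convex_hull_hausdorff (d n : ℕ) (hd : 2 ≤ d) (θ : ℝ)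
    (x : Fin n → EuclideanSpace ℝ (Fin d)) (hx : ∀ i, ‖x i‖ = 1)
    (hsep : ∀ i j, i ≠ j → θ ≤ ‖x i - x j‖)
    (hnet : ∀ z : EuclideanSpace ℝ (Fin d), ‖z‖ = 1 → ∃ i, ‖z - x i‖ ≤ θ) :
    Metric.hausdorffDist (convexHull ℝ (Set.range x))
        (Metric.closedBall (0 : EuclideanSpace ℝ (Fin d)) 1) ≤ θ ^ 2 / 2 :=
  net_convex_hull_hausdorff_general d n θ x hx hnet
end

section
/- For every dimension d ≥ 2 there is a polytope Q_n ⊆ B₂^d with n vertices (n ≥ 2d) such that vol_d(B₂^d) − vol_d(Q_n) ≤ (64π/7) · d · n^{−2/(d−1)} · vol_d(B₂^d). -/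
/-!
Pick a finite `δ`-net `S` of the unit sphere with `δ = √(128π/7) · n^(-1/(d-1))`. Every unit
vector `w` is within `δ` of some `v ∈ S`, so `⟪w, v⟫ ≥ 1 - δ²/2`; by Hahn–Banach the ball of
radius `1 - δ²/2` lies in the convex hull of `S`, and Bernoulli's inequality bounds the missing
volume by `d δ²/2 = (64π/7) d n^(-2/(d-1))` times the volume of the ball (when this factor is
at least `1`, any `n` points do). In dimension `d ≥ 3` a maximal `δ`-separated subset of the
sphere is such a net, and comparing the volumes of the disjoint balls of radius `δ/2` around its
points with the shell `1 - δ/2 ≤ ‖x‖ ≤ 1 + δ/2` shows that it has at most `n` points. In the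
plane this count only gives `8/δ` points, more than `n = √(128π/7)/δ`, so the net is a regular
`n`-gon instead. Finally the net is padded with further points of the ball to exactly `n`
vertices.
-/

open MeasureTheory Real

open Metric Module Set
open scoped NNReal ENNReal RealInnerProductSpace

theorem two_mul_add_one_le_pow {m : ℕ} (hm : 2 ≤ m) : 2 * ((m : ℝ) + 1) ≤ 2.68 ^ m := by
  induction m, hm using Nat.le_induction with
  | base => norm_num
  | succ k _ ih => push_cast; rw [pow_succ]; nlinarith

theorem le_of_mul_pow_add_pow_le {N n δ c : ℝ} {m : ℕ} (hm : 2 ≤ m) (hδ : 0 < δ)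
    (hδm : (m + 1) * δ ^ 2 ≤ 2) (hc : 7.57 ≤ c)
    (hN : N * (δ / 2) ^ (m + 1) + (1 - δ / 2) ^ (m + 1) ≤ (1 + δ / 2) ^ (m + 1))
    (hn : n * δ ^ m = c ^ m) : N ≤ n := by
  have hm' : (2 : ℝ) ≤ m := by exact_mod_cast hm
  have hδ' : δ ≤ 0.82 := by nlinarith
  have hdiff : (1 + δ / 2) ^ (m + 1) - (1 - δ / 2) ^ (m + 1) ≤
      δ * (m + 1) * (1 + δ / 2) ^ m := by
    calc _ ≤ |(1 + δ / 2) ^ (m + 1) - (1 - δ / 2) ^ (m + 1)| := le_abs_self _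
      _ ≤ |(1 + δ / 2) - (1 - δ / 2)| * (m + 1 : ℕ) *
            max |1 + δ / 2| |1 - δ / 2| ^ (m + 1 - 1) := abs_pow_sub_pow_le ..
      _ = δ * (m + 1) * (1 + δ / 2) ^ m := by
        rw [abs_of_pos (by linarith : (0 : ℝ) < 1 + δ / 2),
          abs_of_pos (by linarith : (0 : ℝ) < 1 - δ / 2), max_eq_left (by linarith),
          Nat.add_sub_cancel, abs_of_pos (by linarith)]
        push_cast; ring
  have hpacking : N * δ ^ m ≤ 2 * (m + 1) * (2 + δ) ^ m := by
    refine le_of_mul_le_mul_right ?_ hδ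
    calc N * δ ^ m * δ = 2 ^ (m + 1) * (N * (δ / 2) ^ (m + 1)) := by
          rw [div_pow, pow_succ, pow_succ]; field_simp
      _ ≤ 2 ^ (m + 1) * (δ * (m + 1) * (1 + δ / 2) ^ m) :=
          mul_le_mul_of_nonneg_left (by linarith) (by positivity)
      _ = 2 * (m + 1) * (2 + δ) ^ m * δ := by
          rw [show 1 + δ / 2 = (2 + δ) / 2 by ring, div_pow, pow_succ]; field_simp
  refine le_of_mul_le_mul_right ?_ (pow_pos hδ m)
  calc N * δ ^ m ≤ 2 * (m + 1) * (2 + δ) ^ m := hpacking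
    _ ≤ 2.68 ^ m * 2.82 ^ m := by
        gcongr
        · exact two_mul_add_one_le_pow hm
        · linarith
    _ ≤ c ^ m := by rw [← mul_pow]; gcongr; linarith
    _ = n * δ ^ m := hn.symm

theorem exists_pos_mul_pow_eq_pow_and_sq_eq_mul_rpow {n c : ℝ} (hn : 0 < n) (hc : 0 < c) {m : ℕ}
    (hm : m ≠ 0) : ∃ δ > 0, n * δ ^ m = c ^ m ∧ δ ^ 2 = c ^ 2 * n ^ (-(2 / (m : ℝ))) := by
  have hm' : (m : ℝ) ≠ 0 := Nat.cast_ne_zero.2 hm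
  refine ⟨c * n ^ (-(1 / (m : ℝ))), by positivity, ?_, ?_⟩
  · rw [mul_pow, mul_left_comm, ← rpow_natCast (n ^ _), ← rpow_mul hn.le, neg_mul,
      one_div_mul_cancel hm', rpow_neg_one, mul_inv_cancel₀ hn.ne', mul_one]
  · rw [mul_pow, ← rpow_natCast (n ^ _), ← rpow_mul hn.le]
    ring_nf

theorem Metric.IsSeparated.pairwiseDisjoint_closedBall {X : Type*} [PseudoMetricSpace X]
    {δ : ℝ≥0} {s : Set X} (hs : IsSeparated δ s) : s.PairwiseDisjoint (closedBall · (δ / 2)) := by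
  intro p hp q hq hpq
  refine closedBall_disjoint_closedBall ?_
  have := hs hp hq hpq
  dsimp only at this
  rw [edist_nndist, ENNReal.coe_lt_coe, ← NNReal.coe_lt_coe, coe_nndist] at this
  linarith

section NormedSpace

variable {E : Type*} [NormedAddCommGroup E] [NormedSpace ℝ E]

theorem Finset.exists_superset_card_eq_subset_closedBall [Nontrivial E] {S : Finset E}
    (hS : (S : Set E) ⊆ closedBall 0 1) {n : ℕ} (hn : S.card ≤ n) :
    ∃ V : Finset E, S ⊆ V ∧ V.card = n ∧ (V : Set E) ⊆ closedBall 0 1 := by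
  classical
  have hinf : (closedBall (0 : E) 1).Infinite :=
    infinite_of_mem_nhds 0 (closedBall_mem_nhds 0 one_pos)
  obtain ⟨T, hT, hTcard⟩ := (hinf.sdiff S.finite_toSet).exists_subset_card_eq (n - S.card)
  have hST : Disjoint S T := Finset.disjoint_left.2 fun _ hxS hxT => (hT hxT).2 hxS
  refine ⟨S ∪ T, Finset.subset_union_left, by rw [Finset.card_union_of_disjoint hST]; omega, ?_⟩
  rw [Finset.coe_union]
  exact Set.union_subset hS fun _ hx => (hT hx).1

variable [FiniteDimensional ℝ E]

theorem Metric.IsSeparated.card_mul_pow_add_pow_le {δ : ℝ≥0} (hδ : δ ≤ 2) {t : Finset E}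
    (ht : (t : Set E) ⊆ sphere 0 1) (hsep : IsSeparated δ (t : Set E)) :
    t.card * (δ / 2 : ℝ) ^ finrank ℝ E + (1 - δ / 2 : ℝ) ^ finrank ℝ E ≤
      (1 + δ / 2 : ℝ) ^ finrank ℝ E := by
  set r : ℝ := δ / 2
  have hr : 0 ≤ r := by positivity
  have hr1 : r ≤ 1 := by simp only [r]; rw [div_le_one two_pos]; exact_mod_cast hδ
  obtain rfl | ⟨p₀, hp₀⟩ := t.eq_empty_or_nonempty
  · simpa using pow_le_pow_left₀ (by linarith) (by linarith) _
  have : Nontrivial E := nontrivial_of_ne p₀ 0 (ne_zero_of_mem_unit_sphere ⟨p₀, ht hp₀⟩)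
  have hnorm : ∀ p ∈ t, ‖p‖ = 1 := fun p hp => mem_sphere_zero_iff_norm.1 (ht hp)
  have hdisj : PairwiseDisjoint (t : Set E) (closedBall · r) := hsep.pairwiseDisjoint_closedBall
  borelize E
  set μ : Measure E := Measure.addHaar
  have hcenter : Disjoint (ball 0 (1 - r)) (⋃ p ∈ t, closedBall p r) := by
    refine Set.disjoint_left.2 fun z hz hz' => ?_
    obtain ⟨p, hp, hzp⟩ := Set.mem_iUnion₂.1 hz'
    rw [mem_ball_zero_iff] at hz
    rw [mem_closedBall, dist_eq_norm] at hzp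
    have := norm_le_norm_add_norm_sub' p z
    rw [hnorm p hp, norm_sub_rev] at this
    linarith
  have hsub : ball 0 (1 - r) ∪ ⋃ p ∈ t, closedBall p r ⊆ closedBall 0 (1 + r) := by
    refine Set.union_subset
      (ball_subset_closedBall.trans (closedBall_subset_closedBall (by linarith)))
      (Set.iUnion₂_subset fun p hp => closedBall_subset_closedBall' ?_)
    rw [dist_zero_right, hnorm p hp, add_comm]
  have hvol := measureReal_mono (μ := μ) hsub measure_closedBall_lt_top.ne
  rw [measureReal_union hcenter (t.measurableSet_biUnion fun _ _ => measurableSet_closedBall)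
      measure_ball_lt_top.ne (ne_top_of_le_ne_top measure_closedBall_lt_top.ne
        (measure_mono (subset_union_right.trans hsub))),
    measureReal_biUnion_finset hdisj (fun _ _ => measurableSet_closedBall)
      fun _ _ => measure_closedBall_lt_top.ne,
    ← Measure.addHaar_real_closedBall_eq_addHaar_real_ball] at hvol
  simp only [Measure.addHaar_real_closedBall' μ _ (by linarith : 0 ≤ 1 - r),
    Measure.addHaar_real_closedBall' μ _ hr,
    Measure.addHaar_real_closedBall' μ _ (by linarith : 0 ≤ 1 + r),
    Finset.sum_const, nsmul_eq_mul] at hvol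
  have hB : 0 < μ.real (closedBall 0 1) :=
    ENNReal.toReal_pos (measure_closedBall_pos μ 0 one_pos).ne' measure_closedBall_lt_top.ne
  nlinarith

theorem exists_finset_isCover_sphere_card_mul_pow_add_pow_le {δ : ℝ≥0} (hδ₀ : 0 < δ)
    (hδ : δ ≤ 2) :
    ∃ S : Finset E, (S : Set E) ⊆ sphere 0 1 ∧ IsCover δ (sphere (0 : E) 1) S ∧
      S.card * (δ / 2 : ℝ) ^ finrank ℝ E + (1 - δ / 2 : ℝ) ^ finrank ℝ E ≤
        (1 + δ / 2 : ℝ) ^ finrank ℝ E := by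
  set M := ⌊(1 + δ / 2 : ℝ) ^ finrank ℝ E / (δ / 2 : ℝ) ^ finrank ℝ E⌋₊
  have hpos : (0 : ℝ) < (δ / 2 : ℝ) ^ finrank ℝ E := by positivity
  have hbound : ∀ C ⊆ sphere (0 : E) 1, IsSeparated δ C → C.encard ≤ M := by
    intro C hC hsep
    by_contra! hlt
    obtain ⟨t, htC, htcard⟩ := Set.exists_subset_encard_eq (Order.add_one_le_of_lt hlt)
    have htfin : t.Finite := Set.finite_of_encard_eq_coe htcard
    have hcard : htfin.toFinset.card = M + 1 := by
      rw [← Nat.cast_inj (R := ℕ∞), ← Set.Finite.encard_eq_coe_toFinset_card, htcard]; rfl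
    have key := IsSeparated.card_mul_pow_add_pow_le (t := htfin.toFinset) hδ
      (by simpa using htC.trans hC) (by simpa using hsep.subset htC)
    rw [hcard] at key
    have : ((M + 1 : ℕ) : ℝ) ≤ (1 + δ / 2 : ℝ) ^ finrank ℝ E / (δ / 2 : ℝ) ^ finrank ℝ E := by
      rw [le_div_iff₀ hpos]
      have : (δ : ℝ) ≤ 2 := by exact_mod_cast hδ
      nlinarith [pow_nonneg (by linarith : (0 : ℝ) ≤ 1 - δ / 2) (finrank ℝ E)]
    push_cast at this
    linarith [Nat.lt_floor_add_one ((1 + δ / 2 : ℝ) ^ finrank ℝ E / (δ / 2 : ℝ) ^ finrank ℝ E)]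
  have hfinite : packingNumber δ (sphere (0 : E) 1) ≠ ⊤ :=
    ne_top_of_le_ne_top (ENat.natCast_ne_top M)
      (iSup₂_le fun C hC => iSup_le fun hsep => hbound C hC hsep)
  have hSfin : (maximalSeparatedSet δ (sphere (0 : E) 1)).Finite := by
    rw [← Set.encard_ne_top_iff, encard_maximalSeparatedSet hfinite]
    exact hfinite
  refine ⟨hSfin.toFinset, by simpa using maximalSeparatedSet_subset,
    by simpa using isCover_maximalSeparatedSet hfinite, ?_⟩
  exact IsSeparated.card_mul_pow_add_pow_le hδ (by simpa using maximalSeparatedSet_subset)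
    (by simpa using isSeparated_maximalSeparatedSet)

end NormedSpace

section InnerProductSpace

variable {F : Type*} [NormedAddCommGroup F] [InnerProductSpace ℝ F]

theorem closedBall_subset_convexHull_of_forall_exists_mul_norm_le_inner [CompleteSpace F]
    {S : Finset F} {r : ℝ} (h : ∀ y : F, ∃ v ∈ S, r * ‖y‖ ≤ ⟪y, v⟫) :
    closedBall 0 r ⊆ convexHull ℝ (S : Set F) := by
  intro x hx
  by_contra hxS
  obtain ⟨f, u, hfS, hfx⟩ := geometric_hahn_banach_closed_point (convex_convexHull ℝ _)
    (S.finite_toSet.isCompact_convexHull (𝕜 := ℝ)).isClosed hxS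
  set y := (InnerProductSpace.toDual ℝ F).symm f
  have hfy : ∀ z, f z = ⟪y, z⟫ := fun z => InnerProductSpace.toDual_symm_apply.symm
  obtain ⟨v, hvS, hv⟩ := h y
  have hvx : f v < f x := (hfS v (subset_convexHull ℝ _ hvS)).trans hfx
  have hx' : ‖x‖ ≤ r := mem_closedBall_zero_iff.1 hx
  rw [hfy, hfy] at hvx
  nlinarith [real_inner_le_norm y x, norm_nonneg y]

theorem Metric.IsCover.exists_mul_norm_le_inner [Nontrivial F] {δ : ℝ≥0} {S : Set F}
    (hS : S ⊆ sphere 0 1) (hcover : IsCover δ (sphere (0 : F) 1) S) (y : F) :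
    ∃ v ∈ S, (1 - δ ^ 2 / 2) * ‖y‖ ≤ ⟪y, v⟫ := by
  have hunit : ∀ w ∈ sphere (0 : F) 1, ∃ v ∈ S, 1 - δ ^ 2 / 2 ≤ ⟪w, v⟫ := by
    intro w hw
    obtain ⟨v, hvS, hwv⟩ := mem_iUnion₂.1 (isCover_iff_subset_iUnion_closedBall.1 hcover hw)
    refine ⟨v, hvS, ?_⟩
    rw [mem_closedBall, dist_eq_norm] at hwv
    have hw1 : ‖w‖ = 1 := mem_sphere_zero_iff_norm.1 hw
    have hv1 : ‖v‖ = 1 := mem_sphere_zero_iff_norm.1 (hS hvS)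
    have := norm_sub_sq_real w v
    rw [hw1, hv1] at this
    nlinarith [norm_nonneg (w - v)]
  obtain rfl | hy := eq_or_ne y 0
  · obtain ⟨w, hw⟩ := exists_norm_eq F zero_le_one
    obtain ⟨v, hvS, -⟩ := hunit w (mem_sphere_zero_iff_norm.2 hw)
    exact ⟨v, hvS, by simp⟩
  · have hy' : 0 < ‖y‖ := norm_pos_iff.2 hy
    obtain ⟨v, hvS, hv⟩ := hunit (‖y‖⁻¹ • y) (by simp [norm_smul, hy'.ne'])
    refine ⟨v, hvS, ?_⟩
    rw [real_inner_smul_left, inv_mul_eq_div, le_div_iff₀ hy'] at hv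
    linarith

theorem exists_finset_card_eq_measureReal_closedBall_sub_convexHull_le
    [FiniteDimensional ℝ F] [Nontrivial F] [MeasurableSpace F] [BorelSpace F] (μ : Measure F)
    [μ.IsAddHaarMeasure] {S : Finset F} {n : ℕ} {δ : ℝ≥0} (hS : (S : Set F) ⊆ sphere 0 1)
    (hcover : IsCover δ (sphere (0 : F) 1) S) (hcard : S.card ≤ n) (hδ : (δ : ℝ) ^ 2 ≤ 2) :
    ∃ V : Finset F, V.card = n ∧ (V : Set F) ⊆ closedBall 0 1 ∧
      μ.real (closedBall 0 1) - μ.real (convexHull ℝ (V : Set F)) ≤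
        finrank ℝ F * δ ^ 2 / 2 * μ.real (closedBall 0 1) := by
  obtain ⟨V, hSV, hVcard, hV⟩ :=
    Finset.exists_superset_card_eq_subset_closedBall (hS.trans sphere_subset_closedBall) hcard
  refine ⟨V, hVcard, hV, ?_⟩
  have hball : closedBall 0 (1 - δ ^ 2 / 2) ⊆ convexHull ℝ (V : Set F) := by
    refine closedBall_subset_convexHull_of_forall_exists_mul_norm_le_inner fun y => ?_
    obtain ⟨v, hvS, hv⟩ := hcover.exists_mul_norm_le_inner hS y
    exact ⟨v, hSV hvS, hv⟩
  have hvol := measureReal_mono (μ := μ) hball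
    (V.finite_toSet.isCompact_convexHull (𝕜 := ℝ)).measure_lt_top.ne
  rw [Measure.addHaar_real_closedBall' μ 0 (by linarith)] at hvol
  have hbernoulli := one_add_mul_le_pow (a := -(δ ^ 2 / 2 : ℝ)) (by linarith) (finrank ℝ F)
  rw [← sub_eq_add_neg] at hbernoulli
  nlinarith [measureReal_nonneg (μ := μ) (s := closedBall 0 1)]

end InnerProductSpace

theorem Complex.exists_finset_isCover_sphere {n : ℕ} (hn : 0 < n) {δ : ℝ≥0}
    (hδ : 2 * π ≤ n * δ) :
    ∃ S : Finset ℂ, (S : Set ℂ) ⊆ sphere 0 1 ∧ S.card ≤ n ∧ IsCover δ (sphere (0 : ℂ) 1) S := by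
  have hn' : (0 : ℝ) < n := by exact_mod_cast hn
  set θ : ℕ → ℝ := fun k => π - 2 * π * k / n
  refine ⟨(Finset.range n).image fun k => exp (θ k * I), ?_,
    Finset.card_image_le.trans_eq (by simp), ?_⟩
  · simp [Set.subset_def, norm_exp_ofReal_mul_I]
  rw [isCover_iff_subset_iUnion_closedBall]
  intro z hz
  have hz1 : ‖z‖ = 1 := mem_sphere_zero_iff_norm.1 hz
  -- `arg z ∈ (-π, π]`, so `φ ∈ [0, 2π)` lies in one of the arcs `[2πk/n, 2π(k+1)/n)`, `k < n`.
  set φ := π - arg z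
  have hφ₀ : 0 ≤ φ := by linarith [arg_le_pi z]
  have hφ : φ < 2 * π := by linarith [neg_pi_lt_arg z]
  set k := ⌊φ * n / (2 * π)⌋₊
  have hk₀ : (k : ℝ) ≤ φ * n / (2 * π) := Nat.floor_le (by positivity)
  have hk₁ : φ * n / (2 * π) < k + 1 := Nat.lt_floor_add_one _
  have hkn : k < n := by
    rw [Nat.floor_lt (by positivity), div_lt_iff₀ (by positivity)]
    nlinarith
  simp only [Finset.coe_image, Finset.coe_range, mem_iUnion, mem_image, mem_Iio, mem_closedBall,
    exists_prop]
  refine ⟨_, ⟨k, hkn, rfl⟩, ?_⟩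
  have hθ : |arg z - θ k| ≤ 2 * π / n := by
    rw [le_div_iff₀ (by positivity)] at hk₀
    rw [div_lt_iff₀ (by positivity)] at hk₁
    have h₀ : 2 * π * k / n ≤ φ := by rw [div_le_iff₀ hn']; linarith
    have h₁ : φ - 2 * π * k / n ≤ 2 * π / n := by
      rw [sub_le_iff_le_add, ← add_div, le_div_iff₀ hn']; linarith
    have : arg z - θ k = -(φ - 2 * π * k / n) := by simp only [θ, φ]; ring
    rwa [this, abs_neg, abs_of_nonneg (by linarith)]
  calc dist z (exp (θ k * I)) = ‖exp (I * ↑(arg z - θ k)) - 1‖ := by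
        have : exp (arg z * I) - exp (θ k * I) =
            exp (θ k * I) * (exp (I * ↑(arg z - θ k)) - 1) := by
          rw [mul_sub, ← exp_add]; push_cast; ring_nf
        conv_lhs => rw [dist_eq_norm, ← norm_mul_exp_arg_mul_I z]
        rw [hz1, ofReal_one, one_mul, this, norm_mul, norm_exp_ofReal_mul_I, one_mul]
    _ ≤ |arg z - θ k| := Real.norm_exp_I_mul_ofReal_sub_one_le
    _ ≤ 2 * π / n := hθ
    _ ≤ δ := by rw [div_le_iff₀ hn']; linarith

theorem EuclideanSpace.exists_finset_isCover_sphere_fin_two {n : ℕ} (hn : 0 < n) {δ : ℝ≥0}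
    (hδ : 2 * π ≤ n * δ) :
    ∃ S : Finset (EuclideanSpace ℝ (Fin 2)), (S : Set (EuclideanSpace ℝ (Fin 2))) ⊆ sphere 0 1 ∧
      S.card ≤ n ∧ IsCover δ (sphere (0 : EuclideanSpace ℝ (Fin 2)) 1) S := by
  classical
  obtain ⟨S, hS, hcard, hcover⟩ := Complex.exists_finset_isCover_sphere hn hδ
  set e := Complex.orthonormalBasisOneI.repr
  have he : e '' sphere 0 1 = sphere 0 1 := by simp
  refine ⟨S.image e, ?_, Finset.card_image_le.trans hcard, ?_⟩
  · rw [Finset.coe_image, ← he]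
    exact image_mono hS
  · rw [Finset.coe_image, ← he]
    exact (e.isometry.isCover_image_iff _).2 hcover

theorem EuclideanSpace.exists_finset_isCover_sphere_card_le {m n : ℕ} (hm : 1 ≤ m) (hn : 0 < n)
    {δ : ℝ≥0} (hδ₀ : 0 < δ) (hδm : (m + 1) * (δ : ℝ) ^ 2 ≤ 2)
    (hδn : n * (δ : ℝ) ^ m = √(128 * π / 7) ^ m) :
    ∃ S : Finset (EuclideanSpace ℝ (Fin (m + 1))),
      (S : Set (EuclideanSpace ℝ (Fin (m + 1)))) ⊆ sphere 0 1 ∧ S.card ≤ n ∧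
        IsCover δ (sphere (0 : EuclideanSpace ℝ (Fin (m + 1))) 1) S := by
  have hc : 7.57 ≤ √(128 * π / 7) := by
    rw [Real.le_sqrt (by norm_num) (by positivity)]
    nlinarith [pi_gt_d2]
  obtain rfl | hm := hm.eq_or_lt
  · apply EuclideanSpace.exists_finset_isCover_sphere_fin_two hn
    rw [pow_one] at hδn
    nlinarith [pi_lt_d2]
  obtain ⟨S, hS, hcover, hpacking⟩ := exists_finset_isCover_sphere_card_mul_pow_add_pow_le
    (E := EuclideanSpace ℝ (Fin (m + 1))) hδ₀ (by nlinarith)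
  rw [finrank_euclideanSpace_fin] at hpacking
  exact ⟨S, hS, by exact_mod_cast
    le_of_mul_pow_add_pow_le hm (NNReal.coe_pos.2 hδ₀) hδm hc hpacking hδn, hcover⟩

theorem inscribed_polytope_volume_approx (d n : ℕ) (hd : 2 ≤ d) (hn : 2 * d ≤ n) :
    ∃ V : Finset (EuclideanSpace ℝ (Fin d)), V.card = n ∧
      ↑V ⊆ Metric.closedBall (0 : EuclideanSpace ℝ (Fin d)) 1 ∧
      (volume (Metric.closedBall (0 : EuclideanSpace ℝ (Fin d)) 1)).toReal -
          (volume (convexHull ℝ (V : Set (EuclideanSpace ℝ (Fin d))))).toReal ≤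
        (64 * π / 7) * d * (n : ℝ) ^ (-(2 / ((d : ℝ) - 1))) *
          (volume (Metric.closedBall (0 : EuclideanSpace ℝ (Fin d)) 1)).toReal := by
  obtain ⟨m, rfl⟩ : ∃ m, d = m + 1 := ⟨d - 1, by omega⟩
  obtain ⟨δ, hδ₀, hδn, hδ2⟩ := exists_pos_mul_pow_eq_pow_and_sq_eq_mul_rpow
    (n := n) (c := √(128 * π / 7)) (by exact_mod_cast (by omega : 0 < n)) (by positivity)
    (m := m) (by omega)
  lift δ to ℝ≥0 using hδ₀.le
  have hbound : 64 * π / 7 * ((m + 1 : ℕ) : ℝ) * (n : ℝ) ^ (-(2 / (((m + 1 : ℕ) : ℝ) - 1))) =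
      (m + 1) * δ ^ 2 / 2 := by
    rw [hδ2, sq_sqrt (by positivity)]
    push_cast; ring_nf
  rw [hbound]
  simp only [← measureReal_def]
  rcases le_or_gt 2 ((m + 1) * (δ : ℝ) ^ 2) with hlarge | hsmall
  · obtain ⟨V, -, hV, hVsub⟩ := Finset.exists_superset_card_eq_subset_closedBall
      (S := (∅ : Finset (EuclideanSpace ℝ (Fin (m + 1))))) (by simp) (Nat.zero_le n)
    exact ⟨V, hV, hVsub, (sub_le_self _ measureReal_nonneg).trans
      (le_mul_of_one_le_left measureReal_nonneg (by linarith))⟩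
  obtain ⟨S, hS, hcard, hcover⟩ := EuclideanSpace.exists_finset_isCover_sphere_card_le
    (m := m) (n := n) (δ := δ) (by omega) (by omega) (NNReal.coe_pos.1 hδ₀) hsmall.le hδn
  obtain ⟨V, hV, hVsub, hdeficit⟩ :=
    exists_finset_card_eq_measureReal_closedBall_sub_convexHull_le volume hS hcover hcard
      (by nlinarith)
  rw [finrank_euclideanSpace_fin] at hdeficit
  exact ⟨V, hV, hVsub, hdeficit.trans_eq (by push_cast; ring)⟩
end
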